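/- For a smooth function f on (0,∞), λ > 0, and integers n, k ≥ 0: (-1)^n x^{-(n+λ-1)} (x^{k+n+λ-1} f^{(n)}(x))^{(k)} equals (-1)^n times the n-th derivative of the function x ↦ x^{1-λ}(x^{λ-1+k} f(x))^{(k)}. That is, T^λ_{n,k}(f)(x) = (-1)^n (c^λ_k(f))^{(n)}(x). -/

import Mathlib

open Real Set ContDiff

private lemma hsUD : UniqueDiffOn ℝ (Set.Ioi (0:ℝ)) := isOpen_Ioi.uniqueDiffOn

private lemma smooth_iter {f : ℝ → ℝ} (hf : ContDiffOn ℝ ∞ f (Set.Ioi 0)) (m : ℕ) :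
    ContDiffOn ℝ ∞ (iteratedDerivWithin m f (Set.Ioi 0)) (Set.Ioi 0) := by
  induction m with
  | zero => simpa using hf
  | succ m ih =>
    have hd : ContDiffOn ℝ ∞
        (derivWithin (iteratedDerivWithin m f (Set.Ioi 0)) (Set.Ioi 0)) (Set.Ioi 0) :=
      ih.derivWithin hsUD (by simp)
    exact hd.congr fun y hy => congrFun iteratedDerivWithin_succ y

private lemma rpow_smooth (c : ℝ) : ContDiffOn ℝ ∞ (fun t : ℝ => t ^ c) (Set.Ioi 0) :=
  fun _ hx => (Real.contDiffAt_rpow_const_of_ne (ne_of_gt hx)).contDiffWithinAt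

private lemma diffD {u : ℝ → ℝ} (hu : ContDiffOn ℝ ∞ u (Set.Ioi 0)) (j : ℕ) :
    DifferentiableOn ℝ (iteratedDerivWithin j u (Set.Ioi 0)) (Set.Ioi 0) :=
  (smooth_iter hu j).differentiableOn (by simp)

private lemma linfac {u : ℝ → ℝ} (hu : ContDiffOn ℝ ∞ u (Set.Ioi 0)) (m : ℕ) :
    ∀ x ∈ Set.Ioi (0:ℝ),
    iteratedDerivWithin (m+1) (fun t => t * u t) (Set.Ioi 0) x
      = x * iteratedDerivWithin (m+1) u (Set.Ioi 0) x
        + ((m : ℝ) + 1) * iteratedDerivWithin m u (Set.Ioi 0) x := by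
  induction m with
  | zero =>
    intro x hx
    have hxs := hsUD.uniqueDiffWithinAt hx
    rw [iteratedDerivWithin_one,
      derivWithin_fun_mul (hasDerivAt_id' x).differentiableAt.differentiableWithinAt
        ((hu.differentiableOn (by simp)) x hx),
      (hasDerivAt_id' x).hasDerivWithinAt.derivWithin hxs, iteratedDerivWithin_one]
    simp only [iteratedDerivWithin_zero]
    ring
  | succ m ih =>
    intro x hx
    have hxs := hsUD.uniqueDiffWithinAt hx
    have key : derivWithin (iteratedDerivWithin (m+1) (fun t => t * u t) (Set.Ioi 0)) (Set.Ioi 0) x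
        = derivWithin (fun y => y * iteratedDerivWithin (m+1) u (Set.Ioi 0) y
            + ((m : ℝ) + 1) * iteratedDerivWithin m u (Set.Ioi 0) y) (Set.Ioi 0) x :=
      derivWithin_congr (fun y hy => ih y hy) (ih x hx)
    rw [iteratedDerivWithin_succ, key]
    have h1 : DifferentiableWithinAt ℝ
        (fun y => y * iteratedDerivWithin (m+1) u (Set.Ioi 0) y) (Set.Ioi 0) x :=
      (hasDerivAt_id' x).differentiableAt.differentiableWithinAt.mul ((diffD hu (m+1)) x hx)
    have h2 : DifferentiableWithinAt ℝ
        (fun y => ((m : ℝ) + 1) * iteratedDerivWithin m u (Set.Ioi 0) y) (Set.Ioi 0) x :=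
      ((diffD hu m) x hx).const_mul _
    rw [derivWithin_fun_add h1 h2,
      derivWithin_fun_mul (hasDerivAt_id' x).differentiableAt.differentiableWithinAt
        ((diffD hu (m+1)) x hx),
      (hasDerivAt_id' x).hasDerivWithinAt.derivWithin hxs,
      derivWithin_const_mul _ ((diffD hu m) x hx),
      ← iteratedDerivWithin_succ, ← iteratedDerivWithin_succ]
    push_cast
    ring

private lemma step {h : ℝ → ℝ} (hh : ContDiffOn ℝ ∞ h (Set.Ioi 0)) (μ : ℝ) (k : ℕ)
    {x : ℝ} (hx : x ∈ Set.Ioi (0:ℝ)) :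
    derivWithin (fun y => y ^ (-μ) *
        iteratedDerivWithin k (fun t => t ^ (μ + (k:ℝ)) * h t) (Set.Ioi 0) y) (Set.Ioi 0) x
      = x ^ (-(μ+1)) *
        iteratedDerivWithin k (fun t => t ^ (μ+1+(k:ℝ)) * derivWithin h (Set.Ioi 0) t)
          (Set.Ioi 0) x := by
  have hx0 : (0:ℝ) < x := hx
  have hxs := hsUD.uniqueDiffWithinAt hx
  have hk : ((k : ℕ) : WithTop ℕ∞) ≤ ∞ := by exact_mod_cast le_top
  have hu : ContDiffOn ℝ ∞ (fun t : ℝ => t ^ (μ + (k:ℝ)) * h t) (Set.Ioi 0) :=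
    (rpow_smooth _).mul hh
  have hw : ContDiffOn ℝ ∞ (fun t : ℝ => t ^ (μ+1+(k:ℝ)) * h t) (Set.Ioi 0) :=
    (rpow_smooth _).mul hh
  have hdw : ContDiffOn ℝ ∞
      (derivWithin (fun t : ℝ => t ^ (μ+1+(k:ℝ)) * h t) (Set.Ioi 0)) (Set.Ioi 0) :=
    hw.derivWithin hsUD (by simp)
  have hhd : DifferentiableOn ℝ h (Set.Ioi 0) :=
    hh.differentiableOn (by simp)
  -- LHS computation
  have hrd : DifferentiableWithinAt ℝ (fun y : ℝ => y ^ (-μ)) (Set.Ioi 0) x :=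
    (Real.hasDerivAt_rpow_const (Or.inl hx0.ne')).differentiableAt.differentiableWithinAt
  have hP : derivWithin (fun y : ℝ => y ^ (-μ)) (Set.Ioi 0) x = -μ * x ^ (-μ-1) :=
    (Real.hasDerivAt_rpow_const (Or.inl hx0.ne')).hasDerivWithinAt.derivWithin hxs
  rw [derivWithin_fun_mul hrd ((diffD hu k) x hx), hP, ← iteratedDerivWithin_succ]
  -- RHS computation
  have e1 : ∀ t ∈ Set.Ioi (0:ℝ),
      t ^ (μ+1+(k:ℝ)) * derivWithin h (Set.Ioi 0) t
        = derivWithin (fun y : ℝ => y ^ (μ+1+(k:ℝ)) * h y) (Set.Ioi 0) t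
          - (μ+1+(k:ℝ)) * (t ^ (μ + (k:ℝ)) * h t) := by
    intro t ht
    have ht0 : (0:ℝ) < t := ht
    have hts := hsUD.uniqueDiffWithinAt ht
    have : derivWithin (fun y : ℝ => y ^ (μ+1+(k:ℝ)) * h y) (Set.Ioi 0) t
        = (μ+1+(k:ℝ)) * t ^ (μ+(k:ℝ)) * h t
          + t ^ (μ+1+(k:ℝ)) * derivWithin h (Set.Ioi 0) t := by
      rw [derivWithin_fun_mul
          (Real.hasDerivAt_rpow_const (Or.inl ht0.ne')).differentiableAt.differentiableWithinAt
          (hhd t ht),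
        (Real.hasDerivAt_rpow_const (Or.inl ht0.ne')).hasDerivWithinAt.derivWithin hts,
        show μ+1+(k:ℝ)-1 = μ+(k:ℝ) from by ring]
    rw [this]; ring
  have e2 : iteratedDerivWithin k
        (fun t => t ^ (μ+1+(k:ℝ)) * derivWithin h (Set.Ioi 0) t) (Set.Ioi 0) x
      = iteratedDerivWithin k
        (fun t => derivWithin (fun y : ℝ => y ^ (μ+1+(k:ℝ)) * h y) (Set.Ioi 0) t
          - (μ+1+(k:ℝ)) * (t ^ (μ + (k:ℝ)) * h t)) (Set.Ioi 0) x :=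
    iteratedDerivWithin_congr (fun t ht => e1 t ht) hx
  have e3 : iteratedDerivWithin k
        (fun t => derivWithin (fun y : ℝ => y ^ (μ+1+(k:ℝ)) * h y) (Set.Ioi 0) t
          - (μ+1+(k:ℝ)) * (t ^ (μ + (k:ℝ)) * h t)) (Set.Ioi 0) x
      = iteratedDerivWithin k
          (derivWithin (fun y : ℝ => y ^ (μ+1+(k:ℝ)) * h y) (Set.Ioi 0)) (Set.Ioi 0) x
        - iteratedDerivWithin k
          (fun t => (μ+1+(k:ℝ)) * (t ^ (μ + (k:ℝ)) * h t)) (Set.Ioi 0) x :=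
    iteratedDerivWithin_sub hx hsUD ((hdw.of_le hk) x hx) (((contDiffOn_const.mul hu).of_le hk) x hx)
  have e4 : iteratedDerivWithin k
        (fun t => (μ+1+(k:ℝ)) * (t ^ (μ + (k:ℝ)) * h t)) (Set.Ioi 0) x
      = (μ+1+(k:ℝ)) * iteratedDerivWithin k
          (fun t => t ^ (μ + (k:ℝ)) * h t) (Set.Ioi 0) x :=
    iteratedDerivWithin_const_mul hx hsUD _ ((hu.of_le hk) x hx)
  have e5 : iteratedDerivWithin k
        (derivWithin (fun y : ℝ => y ^ (μ+1+(k:ℝ)) * h y) (Set.Ioi 0)) (Set.Ioi 0) x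
      = iteratedDerivWithin (k+1) (fun y : ℝ => y ^ (μ+1+(k:ℝ)) * h y) (Set.Ioi 0) x :=
    (congrFun iteratedDerivWithin_succ' x).symm
  have e6 : iteratedDerivWithin (k+1) (fun y : ℝ => y ^ (μ+1+(k:ℝ)) * h y) (Set.Ioi 0) x
      = iteratedDerivWithin (k+1)
          (fun t => t * (t ^ (μ + (k:ℝ)) * h t)) (Set.Ioi 0) x := by
    refine iteratedDerivWithin_congr (fun t ht => ?_) hx
    have ht0 : (0:ℝ) < t := ht
    rw [show μ+1+(k:ℝ) = 1 + (μ+(k:ℝ)) from by ring, Real.rpow_add ht0, Real.rpow_one]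
    ring
  have e7 := linfac hu k x hx
  rw [e2, e3, e4, e5, e6, e7]
  have hA : x ^ (-μ) = x ^ (-(μ+1)) * x := by
    rw [show -μ = -(μ+1) + 1 from by ring, Real.rpow_add hx0, Real.rpow_one]
  have hB : x ^ (-μ-1) = x ^ (-(μ+1)) := by
    rw [show -μ-1 = -(μ+1) from by ring]
  rw [hA, hB]
  ring

private lemma main_lemma (f : ℝ → ℝ) (lam : ℝ) (hf : ContDiffOn ℝ ∞ f (Set.Ioi 0)) (k : ℕ) :
    ∀ n : ℕ, ∀ x ∈ Set.Ioi (0:ℝ),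
      x ^ (-((n : ℝ) + lam - 1)) *
        iteratedDerivWithin k
          (fun y => y ^ ((k : ℝ) + (n : ℝ) + lam - 1) * iteratedDerivWithin n f (Set.Ioi 0) y)
          (Set.Ioi 0) x
      = iteratedDerivWithin n
          (fun y => y ^ (1 - lam) *
            iteratedDerivWithin k (fun t => t ^ (lam - 1 + (k : ℝ)) * f t) (Set.Ioi 0) y)
          (Set.Ioi 0) x := by
  intro n
  induction n with
  | zero =>
    intro x hx
    simp only [Nat.cast_zero, iteratedDerivWithin_zero,
      show -((0:ℝ) + lam - 1) = 1 - lam from by ring,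
      show (k:ℝ) + 0 + lam - 1 = lam - 1 + (k:ℝ) from by ring]
  | succ n ih =>
    intro x hx
    have hxs := hsUD.uniqueDiffWithinAt hx
    have key : derivWithin (iteratedDerivWithin n
          (fun y => y ^ (1 - lam) *
            iteratedDerivWithin k (fun t => t ^ (lam - 1 + (k : ℝ)) * f t) (Set.Ioi 0) y)
          (Set.Ioi 0)) (Set.Ioi 0) x
        = derivWithin (fun y => y ^ (-((n : ℝ) + lam - 1)) *
            iteratedDerivWithin k
              (fun t => t ^ ((k : ℝ) + (n : ℝ) + lam - 1) * iteratedDerivWithin n f (Set.Ioi 0) t)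
              (Set.Ioi 0) y) (Set.Ioi 0) x :=
      derivWithin_congr (fun y hy => (ih y hy).symm) ((ih x hx).symm)
    rw [congrFun iteratedDerivWithin_succ x, key]
    have hstep := step (smooth_iter hf n) ((n:ℝ) + lam - 1) k hx
    simp only [show ((n:ℝ) + lam - 1) + (k:ℝ) = (k:ℝ) + (n:ℝ) + lam - 1 from by ring] at hstep
    rw [hstep]
    simp only [Nat.cast_add, Nat.cast_one,
      show -(((n:ℝ)+1) + lam - 1) = -(((n:ℝ) + lam - 1) + 1) from by ring,
      show (k:ℝ) + ((n:ℝ)+1) + lam - 1 = ((n:ℝ) + lam - 1) + 1 + (k:ℝ) from by ring]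
    congr 1
    exact (iteratedDerivWithin_congr
      (fun t ht => by rw [iteratedDerivWithin_succ]) hx).symm

theorem prop_direct (f : ℝ → ℝ) (lam : ℝ) (hlam : 0 < lam)
    (hf : ContDiffOn ℝ (⊤ : ℕ∞) f (Set.Ioi 0)) (n k : ℕ) (x : ℝ) (hx : 0 < x) :
    (-1 : ℝ) ^ n * (x ^ (-((n : ℝ) + lam - 1)) *
      iteratedDerivWithin k
        (fun y => y ^ ((k : ℝ) + (n : ℝ) + lam - 1) * iteratedDerivWithin n f (Set.Ioi 0) y)
        (Set.Ioi 0) x)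
    = (-1 : ℝ) ^ n *
        iteratedDerivWithin n
          (fun y => y ^ (1 - lam) *
            iteratedDerivWithin k (fun t => t ^ (lam - 1 + (k : ℝ)) * f t) (Set.Ioi 0) y)
          (Set.Ioi 0) x := by
  congr 1
  exact main_lemma f lam (hf.of_le (by simp)) k n x hx
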